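/- arXiv:2504.07611 — 3 statements merged into one kernel-verified Lean document; each statement's English description precedes it below -/
import Mathlib

section
/- Let N ≥ 1 and let p : Fin N → ℝ be nonnegative with total mass T = ∑_{j'} p_{j'} > 0, and assume p is injective (all predicted probabilities are distinct). For α' ∈ [0,1], let S = {j : s(j) > α'} be the superlevel set of the CRA conformity score. Then (i) ∑_{j ∈ S} p_j ≥ (1 − α')·T, and (ii) every subset C ⊆ Fin N with ∑_{j ∈ C} p_j ≥ (1 − α')·T satisfies |C| ≥ |S|. In other words, the score-superlevel set S is a minimum-cardinality subset of pixels whose total predicted probability mass is at least a (1 − α') fraction of the total mass, so the adaptive prediction set of CRA coincides with a superlevel set of the conformity score. -/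
open Finset

/-- The CRA score-superlevel set `S = {j : s j > α'}` is a
minimum-cardinality subset of pixels capturing at least a `(1 - α')` fraction
of the total predicted probability mass (Theorem 4.1 of the paper). -/
theorem cra_adaptive_set_equivalence
    (N : ℕ) (hN : 1 ≤ N) (p : Fin N → ℝ)
    (hp : ∀ j, 0 ≤ p j) (hinj : Function.Injective p)
    (hT : 0 < ∑ j', p j')
    (α' : ℝ) (hα0 : 0 ≤ α') (hα1 : α' ≤ 1) :
    ∀ (T : ℝ), T = ∑ j', p j' →
    ∀ (s : Fin N → ℝ), (s = fun j => (∑ j', if p j' ≤ p j then p j' else 0) / T) →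
    ∀ (S : Finset (Fin N)), S = Finset.univ.filter (fun j => α' < s j) →
      ((1 - α') * T ≤ ∑ j ∈ S, p j) ∧
      (∀ C : Finset (Fin N), (1 - α') * T ≤ ∑ j ∈ C, p j → S.card ≤ C.card) := by
  intro T hTdef s hsdef S hSdef
  subst hTdef hsdef hSdef
  set T := ∑ j', p j' with hT'
  set F : Fin N → ℝ := fun j => ∑ j', if p j' ≤ p j then p j' else 0 with hF
  have hFfilter : ∀ j, F j = ∑ j' ∈ Finset.univ.filter (fun j' => p j' ≤ p j), p j' := by
    intro j
    simp [hF, Finset.sum_filter]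
  have hmemS : ∀ j : Fin N,
      (j ∈ Finset.univ.filter (fun j => α' < F j / T)) ↔ α' * T < F j := by
    intro j
    simp only [mem_filter, mem_univ, true_and]
    rw [lt_div_iff₀ hT]
  set S := Finset.univ.filter (fun j => α' < F j / T) with hS
  -- total split
  have hsplit : ∑ j ∈ S, p j + ∑ j ∈ Finset.univ.filter (fun j => ¬ α' < F j / T), p j = T := by
    rw [hS, Finset.sum_filter_add_sum_filter_not]
  -- Part (i)
  have hScle : ∑ j ∈ Finset.univ.filter (fun j => ¬ α' < F j / T), p j ≤ α' * T := by
    set Sc := Finset.univ.filter (fun j => ¬ α' < F j / T) with hSc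
    rcases Sc.eq_empty_or_nonempty with he | hne
    · rw [he, Finset.sum_empty]
      exact mul_nonneg hα0 hT.le
    · obtain ⟨j0, hj0, hmax⟩ := Finset.exists_max_image Sc p hne
      have h1 : ∑ j ∈ Sc, p j ≤ F j0 := by
        rw [hFfilter]
        apply Finset.sum_le_sum_of_subset_of_nonneg
        · intro j hj
          simp only [mem_filter, mem_univ, true_and]
          exact hmax j hj
        · intro j _ _; exact hp j
      have h2 : F j0 ≤ α' * T := by
        have := (Finset.mem_filter.mp hj0).2
        push_neg at this
        calc F j0 ≤ (F j0 / T) * T := by rw [div_mul_cancel₀ _ hT.ne']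
          _ ≤ α' * T := mul_le_mul_of_nonneg_right this hT.le
      linarith
  have part1 : (1 - α') * T ≤ ∑ j ∈ S, p j := by linarith
  refine ⟨part1, ?_⟩
  -- Part (ii)
  intro C hC
  rcases S.eq_empty_or_nonempty with he | hne
  · simp [he]
  obtain ⟨jm, hjmS, hmin⟩ := Finset.exists_min_image S p hne
  have hSchar : ∀ j, j ∈ S ↔ p jm ≤ p j := by
    intro j
    constructor
    · exact fun hj => hmin j hj
    · intro hle
      have hFle : F jm ≤ F j := by
        rw [hFfilter, hFfilter]
        apply Finset.sum_le_sum_of_subset_of_nonneg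
        · intro k hk
          simp only [mem_filter, mem_univ, true_and] at hk ⊢
          exact hk.trans hle
        · intro k _ _; exact hp k
      exact (hmemS j).mpr (lt_of_lt_of_le ((hmemS jm).mp hjmS) hFle)
  by_contra hcon
  push_neg at hcon
  set D := S.erase jm with hD
  have hDchar : ∀ j, j ∈ D ↔ p jm < p j := by
    intro j
    rw [hD, Finset.mem_erase, hSchar]
    constructor
    · rintro ⟨hne', hle⟩
      exact lt_of_le_of_ne hle (fun h => hne' (hinj h.symm))
    · intro hlt
      exact ⟨fun h => absurd (congrArg p h) (by rw [h] at hlt; exact absurd rfl (ne_of_gt hlt)), hlt.le⟩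
  have hcardCD : C.card ≤ D.card := by
    have h := Finset.card_erase_of_mem hjmS
    rw [← hD] at h
    omega
  -- sum over C ≤ sum over D
  have hCD : ∑ j ∈ C, p j ≤ ∑ j ∈ D, p j := by
    have h1 : ∀ j ∈ C \ D, p j ≤ p jm := by
      intro j hj
      have := (Finset.mem_sdiff.mp hj).2
      rw [hDchar] at this
      linarith [not_lt.mp this]
    have h2 : ∀ j ∈ D \ C, p jm ≤ p j := by
      intro j hj
      have := (Finset.mem_sdiff.mp hj).1
      exact ((hDchar j).mp this).le
    have hcards : (C \ D).card ≤ (D \ C).card := by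
      have e1 : (C \ D).card + (C ∩ D).card = C.card := Finset.card_sdiff_add_card_inter C D
      have e2 : (D \ C).card + (D ∩ C).card = D.card := Finset.card_sdiff_add_card_inter D C
      rw [Finset.inter_comm] at e2
      omega
    have k1 : ∑ j ∈ C \ D, p j ≤ (C \ D).card • p jm :=
      Finset.sum_le_card_nsmul _ _ _ h1
    have k2 : (D \ C).card • p jm ≤ ∑ j ∈ D \ C, p j :=
      Finset.card_nsmul_le_sum _ _ _ h2
    have k3 : ((C \ D).card : ℝ) * p jm ≤ ((D \ C).card : ℝ) * p jm :=
      mul_le_mul_of_nonneg_right (Nat.cast_le.mpr hcards) (hp jm)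
    rw [nsmul_eq_mul] at k1 k2
    have e1 : ∑ j ∈ C ∩ D, p j + ∑ j ∈ C \ D, p j = ∑ j ∈ C, p j :=
      Finset.sum_inter_add_sum_sdiff C D p
    have e2 : ∑ j ∈ D ∩ C, p j + ∑ j ∈ D \ C, p j = ∑ j ∈ D, p j :=
      Finset.sum_inter_add_sum_sdiff D C p
    rw [Finset.inter_comm] at e2
    linarith
  -- sum over D = T - F jm
  have hDsum : ∑ j ∈ D, p j = T - F jm := by
    have hDeq : D = Finset.univ.filter (fun j => ¬ p j ≤ p jm) := by
      ext j
      rw [hDchar]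
      simp [not_le]
    have hsplit2 : ∑ j ∈ Finset.univ.filter (fun j => p j ≤ p jm), p j
        + ∑ j ∈ Finset.univ.filter (fun j => ¬ p j ≤ p jm), p j = T :=
      Finset.sum_filter_add_sum_filter_not _ _ _
    rw [hDeq]
    rw [hFfilter]
    linarith
  have hFjm : α' * T < F jm := (hmemS jm).mp hjmS
  linarith
end

section
/- Let N ≥ 1 and let p : Fin N → ℝ be nonnegative with total mass T = ∑_{j'} p_{j'} > 0. For every threshold t ∈ [0,1], the score-superlevel set S_t = {j : s(j) > t} captures at least a (1 − t) fraction of the total probability mass: ∑_{j ∈ S_t} p_j ≥ (1 − t)·T. (No distinctness assumption on the probabilities is needed.) -/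
open Finset

/-! The pixels with score at most `t` carry mass at most `t · T`: if `m` is the heaviest of them,
every one of them has probability at most `p m`, so their total mass is bounded by the mass of
`{j' : p j' ≤ p m}`, which is `s m · T ≤ t · T`. The complement therefore carries at least
`(1 - t) · T`. -/

variable {ι M : Type*} [Fintype ι] [AddCommMonoid M] [LinearOrder M] [IsOrderedAddMonoid M]

/-- `massAtMost p (p j)` is the numerator `s(j) · T` of the CRA score. -/
def massAtMost (p : ι → M) (x : M) : M := ∑ j with p j ≤ x, p j

theorem sum_le_massAtMost_of_forall_le {p : ι → M} (hp : ∀ j, 0 ≤ p j) {L : Finset ι} {x : M}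
    (hx : ∀ j ∈ L, p j ≤ x) : ∑ j ∈ L, p j ≤ massAtMost p x :=
  sum_le_sum_of_subset_of_nonneg (fun j hj => mem_filter.mpr ⟨mem_univ j, hx j hj⟩)
    fun j _ _ => hp j

theorem sum_filter_massAtMost_le {p : ι → M} (hp : ∀ j, 0 ≤ p j) {c : M} (hc : 0 ≤ c) :
    ∑ j with massAtMost p (p j) ≤ c, p j ≤ c := by
  set L := ({j | massAtMost p (p j) ≤ c} : Finset ι)
  obtain hL | hL := L.eq_empty_or_nonempty
  · simpa [hL] using hc
  obtain ⟨m, hmL, hmax⟩ := L.exists_max_image p hL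
  calc ∑ j ∈ L, p j ≤ massAtMost p (p m) := sum_le_massAtMost_of_forall_le hp hmax
    _ ≤ c := (mem_filter.mp hmL).2

theorem cra_superlevel_coverage_general
    (N : ℕ) (p : Fin N → ℝ)
    (hp : ∀ j, 0 ≤ p j) (T : ℝ) (hTdef : T = ∑ j', p j') (hT : 0 < T)
    (s : Fin N → ℝ)
    (hs : s = fun j => (∑ j', if p j' ≤ p j then p j' else 0) / T)
    (t : ℝ) (ht0 : 0 ≤ t) :
    (1 - t) * T ≤ ∑ j ∈ Finset.univ.filter (fun j => t < s j), p j := by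
  have hscore : ∀ j, ¬ t < s j ↔ massAtMost p (p j) ≤ t * T := fun j => by
    rw [hs, not_lt, div_le_iff₀ hT, massAtMost, sum_filter]
  have hlow : ∑ j with ¬ t < s j, p j ≤ t * T := by
    rw [filter_congr fun j _ => hscore j]
    exact sum_filter_massAtMost_le hp (mul_nonneg ht0 hT.le)
  have hsplit := sum_filter_add_sum_filter_not univ (fun j => t < s j) p
  rw [← hTdef] at hsplit
  linarith

/-- For every threshold `t ∈ [0,1]`, the CRA score-superlevel set
`S_t = {j : s j > t}` captures at least a `(1 - t)` fraction of the total
probability mass.  No distinctness assumption on the probabilities is needed. -/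
theorem cra_superlevel_coverage
    (N : ℕ) (hN : 1 ≤ N) (p : Fin N → ℝ)
    (hp : ∀ j, 0 ≤ p j) (T : ℝ) (hTdef : T = ∑ j', p j') (hT : 0 < T)
    (s : Fin N → ℝ)
    (hs : s = fun j => (∑ j', if p j' ≤ p j then p j' else 0) / T)
    (t : ℝ) (ht0 : 0 ≤ t) (ht1 : t ≤ 1) :
    (1 - t) * T ≤ ∑ j ∈ Finset.univ.filter (fun j => t < s j), p j :=
  cra_superlevel_coverage_general N p hp T hTdef hT s hs t ht0
end

section
/- Let N ≥ 1 and let p : Fin N → ℝ be nonnegative, injective (all predicted probabilities distinct), with total mass T = ∑_{j'} p_{j'} > 0. For every threshold t ∈ [0,1] and every subset C ⊆ Fin N with ∑_{j ∈ C} p_j ≥ (1 − t)·T, the cardinality of C is at least that of the score-superlevel set: |C| ≥ |{j : s(j) > t}|. -/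
open Finset

/-- Minimality half of Theorem 4.1: assuming all predicted
probabilities are distinct, every subset `C` capturing at least a `(1 - t)`
fraction of the total mass has cardinality at least that of the CRA
score-superlevel set `{j : s j > t}`. -/
theorem cra_superlevel_minimality
    (N : ℕ) (hN : 1 ≤ N) (p : Fin N → ℝ)
    (hp : ∀ j, 0 ≤ p j) (hinj : Function.Injective p)
    (T : ℝ) (hTdef : T = ∑ j', p j') (hT : 0 < T)
    (s : Fin N → ℝ)
    (hs : s = fun j => (∑ j', if p j' ≤ p j then p j' else 0) / T)
    (t : ℝ) (ht0 : 0 ≤ t) (ht1 : t ≤ 1)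
    (C : Finset (Fin N)) (hC : (1 - t) * T ≤ ∑ j ∈ C, p j) :
    (Finset.univ.filter (fun j => t < s j)).card ≤ C.card := by
  by_contra hcon
  push_neg at hcon
  set S := Finset.univ.filter (fun j => t < s j) with hSdef
  have hSne : S.Nonempty := card_pos.mp (lt_of_le_of_lt (Nat.zero_le _) hcon)
  obtain ⟨j0, hj0S, hj0min⟩ := S.exists_min_image p hSne
  -- S is an up-set
  have hup : ∀ j ∈ S, ∀ k, p j ≤ p k → k ∈ S := by
    intro j hj k hjk
    simp only [hSdef, mem_filter, mem_univ, true_and] at hj ⊢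
    rw [hs] at hj ⊢
    refine lt_of_lt_of_le hj ?_
    have hsum : (∑ j', if p j' ≤ p j then p j' else 0)
        ≤ ∑ j', if p j' ≤ p k then p j' else 0 := by
      refine Finset.sum_le_sum (fun j' _ => ?_)
      by_cases h1 : p j' ≤ p j
      · simp [h1, le_trans h1 hjk]
      · simp only [h1, if_false]
        split
        · exact hp j'
        · exact le_refl 0
    exact div_le_div_of_nonneg_right hsum hT.le
  have hcomp : ∀ k, k ∉ S → p k < p j0 := by
    intro k hk
    by_contra h
    exact hk (hup j0 hj0S k (le_of_not_gt h))
  -- the cumulative sum at j0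
  have hfilter : Finset.univ.filter (fun j' => p j' ≤ p j0)
      = insert j0 (Finset.univ \ S) := by
    ext k
    simp only [mem_filter, mem_univ, true_and, mem_insert, mem_sdiff]
    constructor
    · intro hk
      by_cases hkS : k ∈ S
      · left
        exact hinj (le_antisymm hk (hj0min k hkS))
      · right; exact hkS
    · rintro (rfl | hkS)
      · exact le_refl _
      · exact le_of_lt (hcomp k hkS)
  have hj0notin : j0 ∉ Finset.univ \ S := by simp [hj0S]
  have hcum : (∑ j', if p j' ≤ p j0 then p j' else 0)
      = p j0 + ∑ j' ∈ Finset.univ \ S, p j' := by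
    rw [← Finset.sum_filter, hfilter, Finset.sum_insert hj0notin]
  -- split of total mass
  have hTsplit : (∑ j' ∈ S, p j') + ∑ j' ∈ Finset.univ \ S, p j' = T := by
    rw [hTdef, ← Finset.sum_inter_add_sum_sdiff Finset.univ S p, Finset.univ_inter]
  -- score condition at j0
  have hscore : t * T < p j0 + ∑ j' ∈ Finset.univ \ S, p j' := by
    have : t < s j0 := by
      have := hj0S
      simp only [hSdef, mem_filter, mem_univ, true_and] at this
      exact this
    rw [hs] at this
    simpa [hcum] using (lt_div_iff₀ hT).mp this
  -- hence mass S - p j0 < (1 - t) * T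
  have hkey : (∑ j' ∈ S, p j') - p j0 < (1 - t) * T := by nlinarith [hTsplit]
  -- cardinality comparison
  have hcard : (C \ S).card + 1 ≤ (S \ C).card := by
    have h1 : (C ∩ S).card + (C \ S).card = C.card := Finset.card_inter_add_card_sdiff C S
    have h2 : (S ∩ C).card + (S \ C).card = S.card := Finset.card_inter_add_card_sdiff S C
    rw [Finset.inter_comm] at h2
    omega
  -- mass bounds
  have hCS : (∑ j' ∈ C \ S, p j') ≤ (C \ S).card * p j0 := by
    have := Finset.sum_le_card_nsmul (C \ S) p (p j0)
      (fun x hx => le_of_lt (hcomp x (Finset.mem_sdiff.mp hx).2))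
    simpa [nsmul_eq_mul] using this
  have hSC : ((S \ C).card : ℝ) * p j0 ≤ ∑ j' ∈ S \ C, p j' := by
    have := Finset.card_nsmul_le_sum (S \ C) p (p j0)
      (fun x hx => hj0min x (Finset.mem_sdiff.mp hx).1)
    simpa [nsmul_eq_mul] using this
  have hCsplit : (∑ j' ∈ C ∩ S, p j') + ∑ j' ∈ C \ S, p j' = ∑ j' ∈ C, p j' :=
    Finset.sum_inter_add_sum_sdiff C S p
  have hSsplit : (∑ j' ∈ C ∩ S, p j') + ∑ j' ∈ S \ C, p j' = ∑ j' ∈ S, p j' := by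
    rw [← Finset.sum_inter_add_sum_sdiff S C p, Finset.inter_comm]
  have hpj0 : 0 ≤ p j0 := hp j0
  have hcard' : ((C \ S).card : ℝ) + 1 ≤ ((S \ C).card : ℝ) := by
    exact_mod_cast hcard
  nlinarith [hCS, hSC, hCsplit, hSsplit, hkey, hC, hcard', hpj0]
end
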